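/- Let X be a d-dimensional centered Gaussian vector with positive definite covariance Σ, density φ, and suppose w = Σ^{-1} b has positive components where b ∈ ℝ^d. Then as u → ∞: (i) P(X > ub) ∼ u^{-d} φ(ub) / ∏_{i=1}^d w_i, and (ii) for each fixed z ∈ ℝ^d, φ(z/u + ub) = φ(ub) · exp(−zᵀ Σ^{-1} b + o(1)). -/

import Mathlib

open MeasureTheory Matrix Filter Topology

/-- The density of a centered `d`-dimensional Gaussian with covariance `S`. -/
noncomputable def gaussDensity {d : ℕ} (S : Matrix (Fin d) (Fin d) ℝ) (x : Fin d → ℝ) : ℝ :=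
  (2 * Real.pi) ^ (-(d : ℝ) / 2) * S.det ^ (-(1 : ℝ) / 2) *
    Real.exp (-(x ⬝ᵥ S⁻¹.mulVec x) / 2)

section Aux

variable {d : ℕ}

lemma dot_symm (A : Matrix (Fin d) (Fin d) ℝ) (hA : Aᵀ = A) (x y : Fin d → ℝ) :
    x ⬝ᵥ A.mulVec y = y ⬝ᵥ A.mulVec x := by
  rw [dotProduct_mulVec, ← hA, vecMul_transpose, dotProduct_comm, hA]

lemma quad_expand (A : Matrix (Fin d) (Fin d) ℝ) (hA : Aᵀ = A) (x y : Fin d → ℝ) :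
    (x + y) ⬝ᵥ A.mulVec (x + y)
      = x ⬝ᵥ A.mulVec x + 2 * (x ⬝ᵥ A.mulVec y) + y ⬝ᵥ A.mulVec y := by
  rw [mulVec_add, dotProduct_add, add_dotProduct, add_dotProduct, dot_symm A hA y x]
  ring

lemma smul_dot_smul (A : Matrix (Fin d) (Fin d) ℝ) (a c : ℝ) (x y : Fin d → ℝ) :
    (a • x) ⬝ᵥ A.mulVec (c • y) = (a * c) * (x ⬝ᵥ A.mulVec y) := by
  rw [mulVec_smul, smul_dotProduct, dotProduct_smul, smul_eq_mul, smul_eq_mul]; ring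

lemma gauss_pos (S : Matrix (Fin d) (Fin d) ℝ) (hS : S.PosDef) (x : Fin d → ℝ) :
    0 < gaussDensity S x := by
  have h1 : (0:ℝ) < 2 * Real.pi := by positivity
  have h2 : (0:ℝ) < S.det := hS.det_pos
  unfold gaussDensity
  positivity

lemma cont_dot (v : Fin d → ℝ) : Continuous fun t : Fin d → ℝ => v ⬝ᵥ t := by
  simp only [dotProduct]
  exact continuous_finset_sum _ fun i _ => continuous_const.mul (continuous_apply i)

lemma cont_quad (A : Matrix (Fin d) (Fin d) ℝ) :
    Continuous fun x : Fin d → ℝ => x ⬝ᵥ A.mulVec x := by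
  simp only [dotProduct, mulVec]
  exact continuous_finset_sum _ fun i _ => (continuous_apply i).mul
    (continuous_finset_sum _ fun j _ => continuous_const.mul (continuous_apply j))

lemma gauss_cont (S : Matrix (Fin d) (Fin d) ℝ) : Continuous (gaussDensity S) := by
  unfold gaussDensity
  exact continuous_const.mul (Real.continuous_exp.comp ((cont_quad S⁻¹).neg.div_const 2))

lemma part2 (S : Matrix (Fin d) (Fin d) ℝ) (hS : S.PosDef)
    (b : Fin d → ℝ) (z : Fin d → ℝ) :
      Tendsto (fun u : ℝ =>
          gaussDensity S (u⁻¹ • z + u • b) /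
            (gaussDensity S (u • b) * Real.exp (-(z ⬝ᵥ S⁻¹.mulVec b))))
        atTop (𝓝 1) := by
  have hsymm : (S⁻¹)ᵀ = S⁻¹ := by
    simpa [Matrix.IsHermitian, Matrix.conjTranspose_eq_transpose_of_trivial] using hS.inv.1
  set E : ℝ → ℝ := fun t => Real.exp (-t^2 * (z ⬝ᵥ S⁻¹.mulVec z) / 2) with hE
  have key : ∀ u : ℝ, u ≠ 0 →
      gaussDensity S (u⁻¹ • z + u • b) /
            (gaussDensity S (u • b) * Real.exp (-(z ⬝ᵥ S⁻¹.mulVec b)))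
        = E u⁻¹ := by
    intro u hu
    have hq : -((u⁻¹ • z + u • b) ⬝ᵥ S⁻¹.mulVec (u⁻¹ • z + u • b)) / 2
        - (-((u • b) ⬝ᵥ S⁻¹.mulVec (u • b)) / 2) - (-(z ⬝ᵥ S⁻¹.mulVec b))
        = -(u⁻¹)^2 * (z ⬝ᵥ S⁻¹.mulVec z) / 2 := by
      rw [quad_expand _ hsymm, smul_dot_smul, smul_dot_smul, smul_dot_smul,
        inv_mul_cancel₀ hu]
      ring
    have hcne : ((2 * Real.pi) ^ (-(d : ℝ) / 2) * S.det ^ (-(1 : ℝ) / 2)) ≠ 0 := by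
      have h1 : (0:ℝ) < 2 * Real.pi := by positivity
      have h2 : (0:ℝ) < S.det := hS.det_pos
      positivity
    unfold gaussDensity
    rw [hE]
    simp only []
    rw [← hq, Real.exp_sub, Real.exp_sub]
    field_simp
    ring_nf
    exact mul_inv_cancel₀ (Real.rpow_pos_of_pos hS.det_pos _).ne'
  have hcont : Continuous E := by unfold E; continuity
  have hE0 : E 0 = 1 := by simp [hE]
  have h1 : Tendsto (fun u : ℝ => E u⁻¹) atTop (𝓝 1) := by
    have := (hcont.tendsto 0).comp tendsto_inv_atTop_zero
    rwa [hE0] at this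
  refine h1.congr' ?_
  filter_upwards [eventually_gt_atTop 0] with u hu
  exact (key u (ne_of_gt hu)).symm

end Aux

theorem stmt16 {d : ℕ} (S : Matrix (Fin d) (Fin d) ℝ) (hS : S.PosDef)
    (b w : Fin d → ℝ) (hw : w = S⁻¹.mulVec b) (hwpos : ∀ i, 0 < w i)
    (μ : Measure (Fin d → ℝ))
    (hμ : μ = volume.withDensity fun x => ENNReal.ofReal (gaussDensity S x)) :
    Tendsto (fun u : ℝ =>
        (μ {x | ∀ i, u * b i < x i}).toReal * (∏ i, w i) * u ^ d / gaussDensity S (u • b))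
      atTop (𝓝 1) ∧
    ∀ z : Fin d → ℝ,
      Tendsto (fun u : ℝ =>
          gaussDensity S (u⁻¹ • z + u • b) /
            (gaussDensity S (u • b) * Real.exp (-(z ⬝ᵥ S⁻¹.mulVec b))))
        atTop (𝓝 1) := by
  refine ⟨?_, fun z => part2 S hS b z⟩
  -- notation
  have hsymm : (S⁻¹)ᵀ = S⁻¹ := by
    simpa [Matrix.IsHermitian, Matrix.conjTranspose_eq_transpose_of_trivial] using hS.inv.1
  have hMpsd : ∀ t : Fin d → ℝ, 0 ≤ t ⬝ᵥ S⁻¹.mulVec t := fun t => by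
    simpa using hS.inv.posSemidef.dotProduct_mulVec_nonneg t
  set Q : Set (Fin d → ℝ) := {y | ∀ i, 0 < y i} with hQdef
  have hQ : MeasurableSet Q := by
    have : Q = ⋂ i, (fun y : Fin d → ℝ => y i) ⁻¹' Set.Ioi 0 := by
      ext y; simp [hQdef]
    rw [this]
    exact MeasurableSet.iInter fun i => (measurable_pi_apply i) measurableSet_Ioi
  have hA : ∀ u : ℝ, MeasurableSet {x : Fin d → ℝ | ∀ i, u * b i < x i} := by
    intro u
    have : {x : Fin d → ℝ | ∀ i, u * b i < x i}
        = ⋂ i, (fun y : Fin d → ℝ => y i) ⁻¹' Set.Ioi (u * b i) := by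
      ext y; simp
    rw [this]
    exact MeasurableSet.iInter fun i => (measurable_pi_apply i) measurableSet_Ioi
  set h : ℝ → (Fin d → ℝ) → ℝ :=
    fun u t => Real.exp (-(w ⬝ᵥ t) - t ⬝ᵥ S⁻¹.mulVec t / (2 * u ^ 2)) with hhdef
  set g : (Fin d → ℝ) → ℝ := fun t => Real.exp (-(w ⬝ᵥ t)) with hgdef
  have hcont_h : ∀ u, Continuous (h u) := fun u =>
    Real.continuous_exp.comp ((cont_dot w).neg.sub ((cont_quad S⁻¹).div_const _))
  have hcont_g : Continuous g := Real.continuous_exp.comp (cont_dot w).neg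
  have h_le : ∀ u t, h u t ≤ g t := by
    intro u t
    apply Real.exp_le_exp.2
    have : 0 ≤ t ⬝ᵥ S⁻¹.mulVec t / (2 * u ^ 2) := by
      apply div_nonneg (hMpsd t); positivity
    linarith
  -- the product bound
  set fi : Fin d → ℝ → ℝ :=
    fun i => Set.indicator (Set.Ioi 0) (fun s => Real.exp (-(w i * s))) with hfidef
  have hfi_int : ∀ i, Integrable (fi i) := by
    intro i
    refine (integrable_indicator_iff measurableSet_Ioi).2 ?_
    simpa [neg_mul] using exp_neg_integrableOn_Ioi 0 (hwpos i)
  have hfi_val : ∀ i, ∫ s, fi i s = (w i)⁻¹ := by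
    intro i
    rw [hfidef]
    simp only []
    rw [MeasureTheory.integral_indicator measurableSet_Ioi]
    have := integral_comp_mul_left_Ioi (fun s => Real.exp (-s)) 0 (hwpos i)
    rw [mul_zero] at this
    rw [this, integral_exp_neg_Ioi]
    simp
  have hG_int : Integrable (fun t : Fin d → ℝ => ∏ i, fi i (t i)) :=
    Integrable.fintype_prod (𝕜 := ℝ) hfi_int
  have hind : Q.indicator g = fun t => ∏ i, fi i (t i) := by
    funext t
    by_cases ht : t ∈ Q
    · rw [Set.indicator_of_mem ht]
      have hfit : ∀ i, fi i (t i) = Real.exp (-(w i * t i)) := fun i =>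
        Set.indicator_of_mem (ht i) _
      simp only [hfit]
      rw [← Real.exp_sum, hgdef]
      simp only []
      congr 1
      simp [dotProduct]
    · rw [Set.indicator_of_notMem ht]
      obtain ⟨i, hi⟩ := not_forall.1 ht
      exact (Finset.prod_eq_zero (Finset.mem_univ i)
        (Set.indicator_of_notMem hi _)).symm
  have hg_intQ : IntegrableOn g Q :=
    (integrable_indicator_iff hQ).1 (by rw [hind]; exact hG_int)
  have hg_val : ∫ t in Q, g t = ∏ i, (w i)⁻¹ := by
    rw [← MeasureTheory.integral_indicator hQ, hind,
      integral_fintype_prod_volume_eq_prod (f := fun i => fi i)]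
    exact Finset.prod_congr rfl fun i _ => hfi_val i
  have hnorm_le : ∀ u t, ‖h u t‖ ≤ g t := by
    intro u t
    rw [Real.norm_eq_abs, abs_of_pos (Real.exp_pos _)]
    exact h_le u t
  have hInt_h : ∀ u, IntegrableOn (h u) Q := by
    intro u
    exact Integrable.mono hg_intQ (hcont_h u).aestronglyMeasurable.restrict
      (ae_of_all _ fun t => by
        rw [Real.norm_eq_abs (g t), abs_of_pos (Real.exp_pos _)]
        exact hnorm_le u t)
  set F : ℝ → ℝ := fun u => ∫ t in Q, h u t with hFdef
  have hF_nonneg : ∀ u, 0 ≤ F u := fun u =>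
    integral_nonneg fun t => (Real.exp_pos _).le
  have hFlim : Tendsto F atTop (𝓝 (∏ i, (w i)⁻¹)) := by
    rw [← hg_val]
    refine tendsto_integral_filter_of_dominated_convergence g
      (Eventually.of_forall fun u => (hcont_h u).aestronglyMeasurable.restrict)
      (Eventually.of_forall fun u => ae_of_all _ fun t => hnorm_le u t)
      hg_intQ (ae_of_all _ fun t => ?_)
    have h2u : Tendsto (fun u : ℝ => 2 * u ^ 2) atTop atTop :=
      (tendsto_pow_atTop two_ne_zero).const_mul_atTop two_pos
    have hq0 : Tendsto (fun u : ℝ => t ⬝ᵥ S⁻¹.mulVec t / (2 * u ^ 2)) atTop (𝓝 0) :=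
      Tendsto.div_atTop tendsto_const_nhds h2u
    have : Tendsto (fun u : ℝ => -(w ⬝ᵥ t) - t ⬝ᵥ S⁻¹.mulVec t / (2 * u ^ 2))
        atTop (𝓝 (-(w ⬝ᵥ t))) := by
      simpa using tendsto_const_nhds.sub hq0
    exact (Real.continuous_exp.tendsto _).comp this
  -- key identity
  have hφmeas : Measurable fun x => ENNReal.ofReal (gaussDensity S x) :=
    (gauss_cont S).measurable.ennreal_ofReal
  have hkey : ∀ u : ℝ, 0 < u →
      u ^ d * (μ {x | ∀ i, u * b i < x i}).toReal = gaussDensity S (u • b) * F u := by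
    intro u hu
    set T : (Fin d → ℝ) → (Fin d → ℝ) := fun t => u • b + u⁻¹ • t with hTdef
    have hTmeas : Measurable T := by
      apply Continuous.measurable
      fun_prop
    have hmap : Measure.map T volume = ENNReal.ofReal (u ^ d) • volume := by
      have h1 : Measure.map (fun t : Fin d → ℝ => u⁻¹ • t) volume
          = ENNReal.ofReal (u ^ d) • volume := by
        rw [Measure.map_addHaar_smul (volume : Measure (Fin d → ℝ)) (inv_ne_zero hu.ne')]
        congr 1
        rw [Module.finrank_fin_fun, inv_pow, inv_inv, abs_of_pos (by positivity)]
      have h2 : T = (fun t : Fin d → ℝ => u • b + t) ∘ (fun t : Fin d → ℝ => u⁻¹ • t) := rfl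
      rw [h2, ← Measure.map_map (by fun_prop) (by fun_prop), h1, Measure.map_smul,
        (measurePreserving_add_left volume (u • b)).map_eq]
    have hpre : T ⁻¹' {x | ∀ i, u * b i < x i} = Q := by
      ext t
      simp only [Set.mem_preimage, Set.mem_setOf_eq, hTdef, Pi.add_apply, Pi.smul_apply,
        smul_eq_mul, hQdef]
      refine forall_congr' fun i => ?_
      rw [lt_add_iff_pos_right]
      constructor
      · intro hpos
        by_contra hle
        push_neg at hle
        nlinarith [inv_pos.2 hu]
      · intro hpos
        exact mul_pos (inv_pos.2 hu) hpos
    have hpoint : ∀ t, gaussDensity S (T t) = gaussDensity S (u • b) * h u t := by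
      intro t
      have hwt : w ⬝ᵥ t = b ⬝ᵥ S⁻¹.mulVec t := by
        rw [hw, dotProduct_comm, dot_symm _ hsymm]
      have hexp : -(T t ⬝ᵥ S⁻¹.mulVec (T t)) / 2
          = -((u • b) ⬝ᵥ S⁻¹.mulVec (u • b)) / 2
            + (-(w ⬝ᵥ t) - t ⬝ᵥ S⁻¹.mulVec t / (2 * u ^ 2)) := by
        rw [hTdef]
        simp only []
        rw [quad_expand _ hsymm, smul_dot_smul, smul_dot_smul, smul_dot_smul,
          mul_inv_cancel₀ hu.ne', hwt]
        field_simp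
        ring
      unfold gaussDensity
      rw [hexp, Real.exp_add]
      ring
    have hh_meas : Measurable fun t => ENNReal.ofReal (h u t) :=
      (hcont_h u).measurable.ennreal_ofReal
    have hchain : ENNReal.ofReal (u ^ d) * μ {x | ∀ i, u * b i < x i}
        = ENNReal.ofReal (gaussDensity S (u • b)) * ENNReal.ofReal (F u) := by
      calc ENNReal.ofReal (u ^ d) * μ {x | ∀ i, u * b i < x i}
          = ENNReal.ofReal (u ^ d)
            * ∫⁻ x in {x | ∀ i, u * b i < x i}, ENNReal.ofReal (gaussDensity S x) := by
            rw [hμ, withDensity_apply _ (hA u)]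
        _ = ∫⁻ x in {x | ∀ i, u * b i < x i}, ENNReal.ofReal (gaussDensity S x)
              ∂(Measure.map T volume) := by
            rw [hmap, Measure.restrict_smul, lintegral_smul_measure, smul_eq_mul]
        _ = ∫⁻ t in T ⁻¹' {x | ∀ i, u * b i < x i},
              ENNReal.ofReal (gaussDensity S (T t)) := by
            rw [setLIntegral_map (hA u) hφmeas hTmeas]
        _ = ∫⁻ t in Q, ENNReal.ofReal (gaussDensity S (u • b) * h u t) := by
            rw [hpre]
            exact lintegral_congr fun t => by rw [hpoint t]
        _ = ENNReal.ofReal (gaussDensity S (u • b)) * ∫⁻ t in Q, ENNReal.ofReal (h u t) := by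
            simp_rw [ENNReal.ofReal_mul (gauss_pos S hS (u • b)).le]
            rw [lintegral_const_mul _ hh_meas]
        _ = ENNReal.ofReal (gaussDensity S (u • b)) * ENNReal.ofReal (F u) := by
            rw [ofReal_integral_eq_lintegral_ofReal (hInt_h u)
              (ae_of_all _ fun t => (Real.exp_pos _).le)]
    have := congrArg ENNReal.toReal hchain
    rwa [ENNReal.toReal_mul, ENNReal.toReal_mul, ENNReal.toReal_ofReal (by positivity),
      ENNReal.toReal_ofReal (gauss_pos S hS (u • b)).le,
      ENNReal.toReal_ofReal (hF_nonneg u)] at this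
  -- conclusion
  have hprodpos : (0:ℝ) < ∏ i, w i := Finset.prod_pos fun i _ => hwpos i
  have hfinal : Tendsto (fun u => F u * ∏ i, w i) atTop (𝓝 1) := by
    have := hFlim.mul_const (∏ i, w i)
    rwa [Finset.prod_inv_distrib, inv_mul_cancel₀ hprodpos.ne'] at this
  refine hfinal.congr' ?_
  filter_upwards [eventually_gt_atTop 0] with u hu
  have hk := hkey u hu
  have hφ := gauss_pos S hS (u • b)
  have hud : (0:ℝ) < u ^ d := by positivity
  rw [eq_div_iff hφ.ne']
  linear_combination (-(∏ i, w i)) * hk
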